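/- Let m ≥ 1, n = 2^m, θ ∈ ℝ and ν > 0. Let A_1, …, A_n be independent real random variables, each distributed N(θ, ν/2). For t = 1, …, m let J_t be the set of pairs (j,k) with 1 ≤ j < k ≤ n, j ≡ 1 (mod 2^t) and k − j = 2^{t−1}. Apply successively, for t = 1, …, m and for each (j,k) ∈ J_t, the update (A_j, A_k) ↦ (A_j cos(π/4) + A_k sin(π/4), −A_j sin(π/4) + A_k cos(π/4)). Then the resulting random variables A'_1, …, A'_n are independent, with A'_1 distributed N(√n · θ, ν/2) and A'_j distributed N(0, ν/2) for every j = 2, …, n. -/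

import Mathlib

open MeasureTheory ProbabilityTheory Real

/-- The rotation `g_τ^{(j,k)}` acting on a vector of amplitudes (0-based indices):
`(v j, v k) ↦ (v j cos τ + v k sin τ, -v j sin τ + v k cos τ)`. -/
noncomputable def rotStep (τ : ℝ) (j k : ℕ) (v : ℕ → ℝ) : ℕ → ℝ := fun i =>
  if i = j then v j * Real.cos τ + v k * Real.sin τ
  else if i = k then -v j * Real.sin τ + v k * Real.cos τ
  else v i

/-- The transformation `G₂` on `n = 2^m` amplitudes: for `t = 1, …, m` (here `t = t'+1` with
`t'` ranging over `List.range m`) and for each pair `(j, k)` with (1-based) `j ≡ 1 (mod 2^t)`,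
`k - j = 2^{t-1}` — i.e. 0-based `j = 2^t l`, `k = 2^t l + 2^{t-1}` — apply `g_{π/4}^{(j,k)}`. -/
noncomputable def G2 (m : ℕ) (v : ℕ → ℝ) : ℕ → ℝ :=
  (List.range m).foldl
    (fun (w : ℕ → ℝ) (t : ℕ) =>
      (List.range (2 ^ (m - (t + 1)))).foldl
        (fun (u : ℕ → ℝ) (l : ℕ) =>
          rotStep (Real.pi / 4) (2 ^ (t + 1) * l) (2 ^ (t + 1) * l + 2 ^ t) u) w) v

open Matrix
open scoped NNReal

/-!
Each stage of `G₂` is a product of plane rotations acting on disjoint pairs of coordinates, so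
`G₂` acts on the first `n = 2^m` coordinates by an orthogonal matrix `M`. An orthogonal image of
independent Gaussians with common variance `v` is a Gaussian vector with covariance `v • M Mᵀ = v • 1`;
uncorrelated jointly Gaussian variables are independent, and the means are `M` applied to the
constant vector `θ`. On that vector the stage `t` merges the entries at `2^t l` and `2^t l + 2^(t-1)`
into `√2` times their common value and a `0`, which leaves `√n θ` in the first coordinate and `0`
elsewhere.
-/

section Gaussian

variable {Ω ι : Type*} [MeasurableSpace Ω] {P : Measure Ω} [DecidableEq ι]

theorem hasLaw_of_map_eq_gaussianReal {X : Ω → ℝ} {μ : ℝ} {v : ℝ≥0}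
    (h : P.map X = gaussianReal μ v) : HasLaw X (gaussianReal μ v) P :=
  ⟨(⟨by rw [h]; infer_instance⟩ : HasGaussianLaw X P).aemeasurable, h⟩

theorem covariance_eq_of_iIndepFun_gaussianReal {X : ι → Ω → ℝ} (hindep : iIndepFun X P)
    {μ : ι → ℝ} {v : ℝ≥0} (hlaw : ∀ i, HasLaw (X i) (gaussianReal (μ i) v) P) (a b : ι) :
    cov[X a, X b; P] = if a = b then (v : ℝ) else 0 := by
  have hG i := (hlaw i).hasGaussianLaw
  split_ifs with hab
  · subst hab
    rw [covariance_self (hG a).aemeasurable, (hlaw a).variance_eq, variance_id_gaussianReal]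
  · exact (hindep.indepFun hab).covariance_eq_zero (hG a).memLp_two (hG b).memLp_two

theorem ProbabilityTheory.iIndepFun.orthogonal_mulVec_gaussianReal [Fintype ι]
    {X : ι → Ω → ℝ} (hindep : iIndepFun X P) {μ : ι → ℝ} {v : ℝ≥0} (hlaw : ∀ i, P.map (X i) = gaussianReal (μ i) v)
    {M : Matrix ι ι ℝ} (hM : M ∈ orthogonalGroup ι ℝ) :
    iIndepFun (fun i ω => (M *ᵥ (X · ω)) i) P ∧
      ∀ i, P.map (fun ω => (M *ᵥ (X · ω)) i) = gaussianReal ((M *ᵥ μ) i) v := by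
  have := hindep.isProbabilityMeasure
  replace hlaw i := hasLaw_of_map_eq_gaussianReal (hlaw i)
  have hXG i := (hlaw i).hasGaussianLaw
  have hMX : HasGaussianLaw (fun ω => M *ᵥ (X · ω)) P :=
    (hindep.hasGaussianLaw hXG).map_fun (Matrix.toLin' M).toContinuousLinearMap
  have hmean i : P[fun ω => (M *ᵥ (X · ω)) i] = (M *ᵥ μ) i := by
    simp only [mulVec, dotProduct]
    rw [integral_finsetSum _ fun l _ => ((hXG l).integrable.const_mul _)]
    refine Finset.sum_congr rfl fun l _ => ?_
    rw [integral_const_mul, (hlaw l).integral_eq, integral_id_gaussianReal]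
  have hcov a b : cov[fun ω => (M *ᵥ (X · ω)) a, fun ω => (M *ᵥ (X · ω)) b; P]
      = v * (M * Mᵀ) a b := by
    simp only [mulVec, dotProduct]
    rw [covariance_fun_sum_fun_sum (fun l => (hXG l).memLp_two.const_mul _)
      (fun l => (hXG l).memLp_two.const_mul _)]
    simp only [covariance_const_mul_right, covariance_const_mul_left,
      covariance_eq_of_iIndepFun_gaussianReal hindep hlaw, mul_ite, mul_zero, Finset.sum_ite_eq,
      Finset.mem_univ, if_true, mul_apply, transpose_apply, Finset.mul_sum]
    exact Finset.sum_congr rfl fun _ _ => by ring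
  rw [mem_orthogonalGroup_iff] at hM
  refine ⟨hMX.iIndepFun_of_covariance_eq_zero fun a b hab => by simp [hcov, hM, hab], fun i => ?_⟩
  rw [(hMX.eval i).map_eq_gaussianReal, ← covariance_self (hMX.eval i).aemeasurable, hcov, hM,
    hmean]
  simp

end Gaussian

section Givens

variable {ι : Type*} [DecidableEq ι]

noncomputable def givensRotation (τ : ℝ) (j k : ι) : Matrix ι ι ℝ :=
  Matrix.of fun a =>
    if a = j then Pi.single j (cos τ) + Pi.single k (sin τ)
    else if a = k then Pi.single j (-sin τ) + Pi.single k (cos τ)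
    else Pi.single a 1

variable [Fintype ι]

theorem givensRotation_mulVec_apply (τ : ℝ) (j k : ι) (u : ι → ℝ) (a : ι) :
    (givensRotation τ j k *ᵥ u) a =
      if a = j then u j * cos τ + u k * sin τ
      else if a = k then -u j * sin τ + u k * cos τ
      else u a := by
  simp only [mulVec, givensRotation, of_apply]
  split_ifs <;> simp [dotProduct, add_mul, Finset.sum_add_distrib, Pi.single_apply] <;> ring

theorem givensRotation_mem_orthogonalGroup (τ : ℝ) {j k : ι} (hjk : j ≠ k) :
    givensRotation τ j k ∈ orthogonalGroup ι ℝ := by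
  rw [mem_orthogonalGroup_iff]
  ext a b
  have hrow : (givensRotation τ j k * (givensRotation τ j k)ᵀ) a b =
      (givensRotation τ j k *ᵥ givensRotation τ j k b) a := rfl
  rw [hrow, givensRotation_mulVec_apply]
  simp only [givensRotation, of_apply, one_apply]
  split_ifs <;> simp_all [Ne.symm hjk] <;>
    first | ring1 | linear_combination cos_sq_add_sin_sq τ

end Givens

def IsOrthogonalOnFin (n : ℕ) (f : (ℕ → ℝ) → ℕ → ℝ) : Prop :=
  ∃ M ∈ orthogonalGroup (Fin n) ℝ, ∀ v, (fun i : Fin n => f v i) = M *ᵥ fun i : Fin n => v i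

namespace IsOrthogonalOnFin

variable {n : ℕ}

theorem id : IsOrthogonalOnFin n id := ⟨1, one_mem _, fun v => by simp⟩

theorem comp {f g : (ℕ → ℝ) → ℕ → ℝ} (hg : IsOrthogonalOnFin n g) (hf : IsOrthogonalOnFin n f) :
    IsOrthogonalOnFin n (g ∘ f) := by
  obtain ⟨M, hM, hgM⟩ := hg
  obtain ⟨N, hN, hfN⟩ := hf
  exact ⟨M * N, mul_mem hM hN, fun v => by
    simp only [Function.comp_apply, hgM, hfN v, mulVec_mulVec]⟩

theorem foldl {α : Type*} {g : α → (ℕ → ℝ) → ℕ → ℝ} :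
    ∀ {L : List α}, (∀ x ∈ L, IsOrthogonalOnFin n (g x)) →
      IsOrthogonalOnFin n fun v => L.foldl (fun w x => g x w) v
  | [], _ => id
  | x :: _, h =>
    (foldl fun y hy => h y (List.mem_cons_of_mem x hy)).comp (h x List.mem_cons_self)

theorem rotStep (τ : ℝ) {j k : ℕ} (hj : j < n) (hk : k < n) (hjk : j ≠ k) :
    IsOrthogonalOnFin n (rotStep τ j k) := by
  refine ⟨givensRotation τ ⟨j, hj⟩ ⟨k, hk⟩,
    givensRotation_mem_orthogonalGroup τ (by simpa [Fin.ext_iff] using hjk), fun v => ?_⟩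
  funext i
  simp [givensRotation_mulVec_apply, _root_.rotStep, Fin.ext_iff]

end IsOrthogonalOnFin

theorem two_pow_mul_add_lt {m t l : ℕ} (ht : t < m) (hl : l < 2 ^ (m - (t + 1))) :
    2 ^ (t + 1) * l + 2 ^ t < 2 ^ m := by
  have := Nat.one_le_two_pow (n := t)
  calc 2 ^ (t + 1) * l + 2 ^ t < 2 ^ (t + 1) * (l + 1) := by rw [mul_add, pow_succ]; omega
    _ ≤ 2 ^ (t + 1) * 2 ^ (m - (t + 1)) := Nat.mul_le_mul_left _ hl
    _ = 2 ^ m := by rw [← pow_add, Nat.add_sub_cancel' ht]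

theorem isOrthogonalOnFin_G2 (m : ℕ) : IsOrthogonalOnFin (2 ^ m) (G2 m) := by
  refine IsOrthogonalOnFin.foldl fun t ht => IsOrthogonalOnFin.foldl fun l hl => ?_
  rw [List.mem_range] at ht hl
  have hk := two_pow_mul_add_lt ht hl
  have := Nat.one_le_two_pow (n := t)
  exact .rotStep _ (by omega) hk (by omega)

section ConstantVector

theorem not_two_pow_dvd_of_mem_Ico {t q i : ℕ} (hlo : 2 ^ (t + 1) * q ≤ i)
    (hhi : i < 2 ^ (t + 1) * q + 2 ^ (t + 1)) (hj : i ≠ 2 ^ (t + 1) * q)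
    (hk : i ≠ 2 ^ (t + 1) * q + 2 ^ t) : ¬ 2 ^ t ∣ i := by
  rintro ⟨d, rfl⟩
  have hP := Nat.one_le_two_pow (n := t)
  rw [pow_succ, mul_assoc] at hlo hhi hj hk
  have h2q : 2 * q ≤ d := Nat.le_of_mul_le_mul_left hlo hP
  have hd : d < 2 * q + 2 := Nat.lt_of_mul_lt_mul_left (a := 2 ^ t) (by linarith)
  obtain rfl | rfl : d = 2 * q ∨ d = 2 * q + 1 := by omega
  · exact hj rfl
  · exact hk (by ring)

-- The first `t` stages of `G2 m` applied to the constant vector `θ`; entries from `2 ^ m` on are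
-- never touched.
noncomputable def constAfterStages (m : ℕ) (θ : ℝ) (t : ℕ) : ℕ → ℝ := fun i =>
  if 2 ^ m ≤ i then θ else if 2 ^ t ∣ i then √2 ^ t * θ else 0

variable {m : ℕ} {θ : ℝ}

theorem constAfterStages_succ_of_not_dvd {t i : ℕ} (h : ¬ 2 ^ t ∣ i) :
    constAfterStages m θ (t + 1) i = constAfterStages m θ t i := by
  have h' : ¬ 2 ^ (t + 1) ∣ i := fun h' => h ((pow_dvd_pow 2 t.le_succ).trans h')
  simp [constAfterStages, h, h']

theorem rotStep_constAfterStages {t q : ℕ} (hq : 2 ^ (t + 1) * q + 2 ^ (t + 1) ≤ 2 ^ m) (i : ℕ) :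
    rotStep (π / 4) (2 ^ (t + 1) * q) (2 ^ (t + 1) * q + 2 ^ t)
        (fun x => if x < 2 ^ (t + 1) * q then constAfterStages m θ (t + 1) x
          else constAfterStages m θ t x) i
      = if i < 2 ^ (t + 1) * q + 2 ^ (t + 1) then constAfterStages m θ (t + 1) i
          else constAfterStages m θ t i := by
  set j := 2 ^ (t + 1) * q
  have hP := Nat.one_le_two_pow (n := t)
  have hdvd_j : 2 ^ t ∣ j := (pow_dvd_pow 2 t.le_succ).mul_right q
  have hndvd_k : ¬ 2 ^ (t + 1) ∣ j + 2 ^ t := by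
    rw [Nat.dvd_add_right (dvd_mul_right _ _), Nat.pow_dvd_pow_iff_le_right (by norm_num)]
    omega
  have hcj : constAfterStages m θ t j = √2 ^ t * θ := by
    rw [constAfterStages, if_neg (by omega), if_pos hdvd_j]
  have hck : constAfterStages m θ t (j + 2 ^ t) = √2 ^ t * θ := by
    rw [constAfterStages, if_neg (by omega), if_pos (dvd_add hdvd_j dvd_rfl)]
  have hc'j : constAfterStages m θ (t + 1) j = √2 ^ (t + 1) * θ := by
    rw [constAfterStages, if_neg (by omega), if_pos (dvd_mul_right _ _)]
  have hc'k : constAfterStages m θ (t + 1) (j + 2 ^ t) = 0 := by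
    rw [constAfterStages, if_neg (by omega), if_neg hndvd_k]
  rcases eq_or_ne i j with rfl | hij
  · simp only [rotStep, if_true, lt_irrefl, if_false, show ¬ j + 2 ^ t < j by omega,
      show j < j + 2 ^ (t + 1) by omega, hcj, hck, hc'j, cos_pi_div_four, sin_pi_div_four]
    ring
  rcases eq_or_ne i (j + 2 ^ t) with rfl | hik
  · simp only [rotStep, if_neg hij, if_true, lt_irrefl, if_false, show ¬ j + 2 ^ t < j by omega,
      show j + 2 ^ t < j + 2 ^ (t + 1) by omega, hcj, hck, hc'k, cos_pi_div_four,
      sin_pi_div_four]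
    ring
  simp only [rotStep, if_neg hij, if_neg hik]
  by_cases hlo : i < j
  · rw [if_pos hlo, if_pos (by omega)]
  by_cases hhi : i < j + 2 ^ (t + 1)
  · rw [if_neg hlo, if_pos hhi,
      constAfterStages_succ_of_not_dvd (not_two_pow_dvd_of_mem_Ico (by omega) hhi hij hik)]
  · rw [if_neg hlo, if_neg hhi]

theorem foldl_rotStep_constAfterStages {t : ℕ} :
    ∀ q, 2 ^ (t + 1) * q ≤ 2 ^ m →
      (List.range q).foldl
          (fun u l => rotStep (π / 4) (2 ^ (t + 1) * l) (2 ^ (t + 1) * l + 2 ^ t) u)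
          (constAfterStages m θ t)
        = fun i => if i < 2 ^ (t + 1) * q then constAfterStages m θ (t + 1) i
            else constAfterStages m θ t i
  | 0, _ => by simp
  | q + 1, hq => by
    rw [mul_add, mul_one] at hq
    rw [List.range_succ, List.foldl_append, List.foldl_cons, List.foldl_nil,
      foldl_rotStep_constAfterStages q ((Nat.le_add_right _ _).trans hq)]
    funext i
    rw [rotStep_constAfterStages hq, mul_add, mul_one]

theorem foldl_stages_const :
    ∀ t ≤ m, (List.range t).foldl
        (fun w s => (List.range (2 ^ (m - (s + 1)))).foldl
          (fun u l => rotStep (π / 4) (2 ^ (s + 1) * l) (2 ^ (s + 1) * l + 2 ^ s) u) w)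
        (fun _ => θ)
      = constAfterStages m θ t
  | 0, _ => by funext i; simp [constAfterStages]
  | t + 1, ht => by
    rw [List.range_succ, List.foldl_append, List.foldl_cons, List.foldl_nil,
      foldl_stages_const t (by omega), foldl_rotStep_constAfterStages _ (by
        rw [← pow_add, Nat.add_sub_cancel' ht]), ← pow_add, Nat.add_sub_cancel' ht]
    funext i
    by_cases hi : i < 2 ^ m
    · rw [if_pos hi]
    · simp [constAfterStages, hi, not_lt.mp hi]

theorem G2_const : G2 m (fun _ => θ) = constAfterStages m θ m :=
  foldl_stages_const m le_rfl

theorem G2_const_zero : G2 m (fun _ => θ) 0 = √(2 ^ m) * θ := by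
  have : √(2 ^ m) = √2 ^ m := by
    rw [Real.sqrt_eq_iff_mul_self_eq (by positivity) (by positivity), ← mul_pow,
      Real.mul_self_sqrt zero_le_two]
  simp [G2_const, constAfterStages, this]

theorem G2_const_of_pos {i : ℕ} (h0 : 0 < i) (hi : i < 2 ^ m) : G2 m (fun _ => θ) i = 0 := by
  simp [G2_const, constAfterStages, not_le.mpr hi, Nat.not_dvd_of_pos_of_lt h0 hi]

end ConstantVector

theorem statement4_general
    {Ω : Type} [MeasureSpace Ω]
    (m : ℕ) (θ ν : ℝ)
    (A : ℕ → Ω → ℝ)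
    (hindep : iIndepFun (fun i : Fin (2 ^ m) => A i) ℙ)
    (hlaw : ∀ i < 2 ^ m,
      (ℙ : Measure Ω).map (A i) = gaussianReal θ (Real.toNNReal (ν / 2))) :
    iIndepFun
      (fun (i : Fin (2 ^ m)) (ω : Ω) => G2 m (fun j => A j ω) i) ℙ
    ∧ (ℙ : Measure Ω).map (fun ω => G2 m (fun j => A j ω) 0)
        = gaussianReal (Real.sqrt (2 ^ m) * θ) (Real.toNNReal (ν / 2))
    ∧ ∀ i, 1 ≤ i → i < 2 ^ m →
        (ℙ : Measure Ω).map (fun ω => G2 m (fun j => A j ω) i)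
          = gaussianReal 0 (Real.toNNReal (ν / 2)) := by
  obtain ⟨M, hM, hG2⟩ := isOrthogonalOnFin_G2 m
  have hY : (fun (i : Fin (2 ^ m)) (ω : Ω) => G2 m (fun j => A j ω) i)
      = fun i ω => (M *ᵥ fun l : Fin (2 ^ m) => A l ω) i := by
    funext i ω
    exact congrFun (hG2 _) i
  have hmean (i : Fin (2 ^ m)) : (M *ᵥ fun _ => θ) i = G2 m (fun _ => θ) i :=
    (congrFun (hG2 fun _ => θ) i).symm
  obtain ⟨hindepY, hlawY⟩ := hindep.orthogonal_mulVec_gaussianReal (fun i => hlaw i i.2) hM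
  refine ⟨hY ▸ hindepY, ?_, fun i hi0 hi => ?_⟩
  · have h0 := hlawY ⟨0, Nat.two_pow_pos m⟩
    rwa [hmean, G2_const_zero, ← congrFun hY ⟨0, Nat.two_pow_pos m⟩] at h0
  · have hi' := hlawY ⟨i, hi⟩
    rwa [hmean, G2_const_of_pos hi0 hi, ← congrFun hY ⟨i, hi⟩] at hi'

/-- applying `G₂` to `n = 2^m` i.i.d. `N(θ, ν/2)` amplitudes yields independent
amplitudes, the first distributed `N(√n θ, ν/2)` and the others `N(0, ν/2)`. -/
theorem statement4
    {Ω : Type} [MeasureSpace Ω] [IsProbabilityMeasure (ℙ : Measure Ω)]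
    (m : ℕ) (hm : 1 ≤ m) (θ ν : ℝ) (hν : 0 < ν)
    (A : ℕ → Ω → ℝ) (hAmeas : ∀ i, Measurable (A i))
    (hindep : iIndepFun (fun i : Fin (2 ^ m) => A i) ℙ)
    (hlaw : ∀ i < 2 ^ m,
      (ℙ : Measure Ω).map (A i) = gaussianReal θ (Real.toNNReal (ν / 2))) :
    iIndepFun
      (fun (i : Fin (2 ^ m)) (ω : Ω) => G2 m (fun j => A j ω) i) ℙ
    ∧ (ℙ : Measure Ω).map (fun ω => G2 m (fun j => A j ω) 0)
        = gaussianReal (Real.sqrt (2 ^ m) * θ) (Real.toNNReal (ν / 2))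
    ∧ ∀ i, 1 ≤ i → i < 2 ^ m →
        (ℙ : Measure Ω).map (fun ω => G2 m (fun j => A j ω) i)
          = gaussianReal 0 (Real.toNNReal (ν / 2)) :=
  statement4_general m θ ν A hindep hlaw
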